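/- Let (𝖩_n) be a sequence of integral convex polygons in ℝ² with p(𝖩_n)^{-1}𝖩_n → 𝖩_∞ in the Hausdorff metric, where 𝖩_∞ is a convex body with nonempty interior. Then liminf_n (minimum interior vertex angle of 𝖩_n) > 0. -/

import Mathlib

open Set MeasureTheory Metric Filter Topology Pointwise

/-- The lattice points of the plane. -/
def IsLatticePt (x : EuclideanSpace ℝ (Fin 2)) : Prop := ∀ i, ∃ n : ℤ, x i = (n : ℝ)

/-- Perimeter: the 1-dimensional Hausdorff measure of the boundary. -/
noncomputable def per (J : Set (EuclideanSpace ℝ (Fin 2))) : ℝ :=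
  (μH[1] (frontier J)).toReal

/-- The opening angle of the convex set `J` at a point `v`: the supremum of the angles
`∠ a v b` over points `a, b` of `J` distinct from `v`. -/
noncomputable def vertexAngle (J : Set (EuclideanSpace ℝ (Fin 2)))
    (v : EuclideanSpace ℝ (Fin 2)) : ℝ :=
  sSup {θ | ∃ a ∈ J, ∃ b ∈ J, a ≠ v ∧ b ≠ v ∧ θ = EuclideanGeometry.angle a v b}

/-- Minimum interior angle of a convex polygon: the infimum of the opening angles at
its vertices (extreme points). -/
noncomputable def minAngle (J : Set (EuclideanSpace ℝ (Fin 2))) : ℝ :=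
  sInf {θ | ∃ v ∈ Set.extremePoints ℝ J, θ = vertexAngle J v}

/-!
Rescaled by the perimeter, the polygons are eventually Hausdorff-close to `O`, which contains a
disc `closedBall x r` and lies in a disc `closedBall x R`; being convex and closed, the rescaled
polygons then contain `closedBall x (r / 2)` and lie in `closedBall x (R + r / 4)`. At an extreme
point `v` of a set squeezed between `closedBall z ρ` and `closedBall z R`, the centre `z` and the
point `b` of the inner circle with `b - z ⊥ z - v` span the angle
`arctan (ρ / dist z v) ≥ arctan (ρ / R)`. Angles do not change under scaling, so every vertex
angle of `J n` is eventually at least `arctan ((r / 2) / (R + r / 4)) > 0`.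
-/

open Real EuclideanGeometry
open scoped RealInnerProductSpace EuclideanSpace

section InnerProductSpace

variable {E : Type*} [NormedAddCommGroup E] [InnerProductSpace ℝ E]

theorem Convex.closedBall_subset_of_forall_infDist_le [CompleteSpace E] {K : Set E}
    (hK : Convex ℝ K) (hKc : IsClosed K) (hKne : K.Nonempty) {x : E} {r ε : ℝ} (hε : 0 < ε)
    (h : ∀ y ∈ closedBall x r, infDist y K ≤ ε) : closedBall x (r - 2 * ε) ⊆ K := by
  intro y hy
  by_contra hyK
  obtain ⟨k, hkK, hk⟩ := exists_norm_eq_iInf_of_complete_convex hKne hKc.isComplete hK y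
  have hsep : ∀ p ∈ K, ⟪y - k, p - k⟫ ≤ 0 := (norm_eq_iInf_iff_real_inner_le_zero hK hkK).1 hk
  have hyk : y - k ≠ 0 := sub_ne_zero.2 fun h => hyK (h ▸ hkK)
  have hd : 0 < ‖y - k‖ := norm_pos_iff.2 hyk
  set u := ‖y - k‖⁻¹ • (y - k)
  have hu : ‖u‖ = 1 := norm_smul_inv_norm hyk
  set z := y + (2 * ε) • u
  have hz : z ∈ closedBall x r := by
    have : dist z y = 2 * ε := by simp [z, dist_eq_norm, norm_smul, hu, hε.le]
    rw [mem_closedBall] at hy ⊢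
    linarith [dist_triangle z y x]
  obtain ⟨p, hpK, hzp⟩ := (infDist_lt_iff hKne).1 ((h z hz).trans_lt (by linarith : ε < 2 * ε))
  -- `⟪u, ·⟫` is at most `⟪u, k⟫` on `K` (supporting hyperplane at the nearest point `k`).
  have hfar : ‖y - k‖ + 2 * ε ≤ ⟪u, z - p⟫ := by
    have huy : ⟪u, y - k⟫ = ‖y - k‖ := by
      rw [real_inner_smul_left, real_inner_self_eq_norm_sq]
      field_simp
    have hup : ⟪u, p - k⟫ ≤ 0 := by
      rw [real_inner_smul_left]
      exact mul_nonpos_of_nonneg_of_nonpos (by positivity) (hsep p hpK)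
    have : z - p = (y - k) + (2 * ε) • u - (p - k) := by simp only [z]; abel
    rw [this, inner_sub_right, inner_add_right, real_inner_smul_right, real_inner_self_eq_norm_sq,
      hu, huy]
    linarith
  have hnear := real_inner_le_norm u (z - p)
  rw [hu, one_mul, ← dist_eq_norm] at hnear
  linarith

theorem Convex.closedBall_subset_of_hausdorffDist_lt [CompleteSpace E] {K O : Set E}
    (hK : Convex ℝ K) (hKc : IsClosed K) (hKne : K.Nonempty) (hfin : hausdorffEDist K O ≠ ⊤)
    {x : E} {r ε : ℝ} (hrO : closedBall x r ⊆ O) (h : hausdorffDist K O < ε) :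
    closedBall x (r - 2 * ε) ⊆ K :=
  hK.closedBall_subset_of_forall_infDist_le hKc hKne (hausdorffDist_nonneg.trans_lt h)
    fun y hy => by
      rw [hausdorffEDist_comm] at hfin
      exact (infDist_le_hausdorffDist_of_mem (hrO hy) hfin).trans (hausdorffDist_comm.trans_le h.le)

theorem exists_dist_eq_angle_eq_arctan [Fact (Module.finrank ℝ E = 2)] {z v : E} (hzv : z ≠ v)
    {ρ : ℝ} (hρ : 0 ≤ ρ) : ∃ b, dist b z = ρ ∧ ∠ z v b = arctan (ρ / dist z v) := by
  have : FiniteDimensional ℝ E := Module.finite_of_finrank_eq_succ (Fact.out : _ = 2)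
  let o : Orientation ℝ E (Fin 2) := (Module.finBasisOfFinrankEq ℝ E Fact.out).orientation
  have hw : z - v ≠ 0 := sub_ne_zero.2 hzv
  have hcoef : ‖ρ / ‖z - v‖‖ = ρ / ‖z - v‖ := Real.norm_of_nonneg (by positivity)
  refine ⟨z + (ρ / ‖z - v‖) • o.rightAngleRotation (z - v), ?_, ?_⟩
  · simp only [dist_eq_norm, add_sub_cancel_left, norm_smul, LinearIsometryEquiv.norm_map, hcoef]
    field_simp
  · rw [EuclideanGeometry.angle, vsub_eq_sub, vsub_eq_sub,
      show z + (ρ / ‖z - v‖) • o.rightAngleRotation (z - v) - v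
        = (z - v) + (ρ / ‖z - v‖) • o.rightAngleRotation (z - v) by abel,
      InnerProductGeometry.angle_add_eq_arctan_of_inner_eq_zero _ hw]
    · simp only [norm_smul, LinearIsometryEquiv.norm_map, dist_eq_norm, hcoef]
      field_simp
    · rw [real_inner_smul_right, real_inner_comm, o.inner_rightAngleRotation_self, mul_zero]

end InnerProductSpace

theorem Metric.subset_closedBall_of_hausdorffDist_lt {α : Type*} [PseudoMetricSpace α]
    {K O : Set α} (hfin : hausdorffEDist K O ≠ ⊤) {x : α} {R ε : ℝ} (hOR : O ⊆ closedBall x R)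
    (h : hausdorffDist K O < ε) : K ⊆ closedBall x (R + ε) := by
  intro y hy
  obtain ⟨o, ho, hyo⟩ := exists_dist_lt_of_hausdorffDist_lt hy h hfin
  rw [mem_closedBall]
  linarith [dist_triangle y o x, mem_closedBall.1 (hOR ho)]

section Angles

variable {K : Set (EuclideanSpace ℝ (Fin 2))}

theorem angle_le_vertexAngle {a b v : EuclideanSpace ℝ (Fin 2)} (ha : a ∈ K) (hb : b ∈ K)
    (hav : a ≠ v) (hbv : b ≠ v) : ∠ a v b ≤ vertexAngle K v := by
  refine le_csSup ⟨π, ?_⟩ ⟨a, ha, b, hb, hav, hbv, rfl⟩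
  rintro _ ⟨_, _, _, _, _, _, rfl⟩
  exact angle_le_pi _ _ _

theorem vertexAngle_nonneg (v : EuclideanSpace ℝ (Fin 2)) : 0 ≤ vertexAngle K v :=
  Real.sSup_nonneg fun _ ⟨_, _, _, _, _, _, h⟩ => h ▸ angle_nonneg _ _ _

theorem vertexAngle_le_pi (v : EuclideanSpace ℝ (Fin 2)) : vertexAngle K v ≤ π :=
  Real.sSup_le (fun _ ⟨_, _, _, _, _, _, h⟩ => h ▸ angle_le_pi _ _ _) pi_pos.le

theorem minAngle_le_pi : minAngle K ≤ π := by
  rcases (extremePoints ℝ K).eq_empty_or_nonempty with h | ⟨v, hv⟩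
  · simp [minAngle, h, pi_pos.le]
  · refine le_trans (csInf_le ⟨0, ?_⟩ ⟨v, hv, rfl⟩) (vertexAngle_le_pi v)
    rintro _ ⟨w, _, rfl⟩
    exact vertexAngle_nonneg w

theorem arctan_div_le_vertexAngle {z v : EuclideanSpace ℝ (Fin 2)} {ρ R : ℝ} (hρ : 0 < ρ)
    (hball : closedBall z ρ ⊆ K) (hsub : K ⊆ closedBall z R) (hv : v ∈ extremePoints ℝ K) :
    arctan (ρ / R) ≤ vertexAngle K v := by
  have hzv : z ≠ v := by
    rintro rfl
    have hz : z ∈ interior K :=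
      interior_mono hball (ball_subset_interior_closedBall (mem_ball_self hρ))
    exact disjoint_left.1 (disjoint_interior_extremePoints K) hz hv
  obtain ⟨b, hbz, hangle⟩ := exists_dist_eq_angle_eq_arctan hzv hρ.le
  have hbv : b ≠ v := by
    intro hbv
    rw [hbv, angle_self_right] at hangle
    linarith [arctan_lt_pi_div_two (ρ / dist z v)]
  have hvR : dist z v ≤ R := by simpa [dist_comm] using hsub hv.1
  calc arctan (ρ / R) ≤ arctan (ρ / dist z v) :=
        arctan_le_arctan_iff.2 (div_le_div_of_nonneg_left hρ.le (dist_pos.2 hzv) hvR)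
    _ = ∠ z v b := hangle.symm
    _ ≤ vertexAngle K v :=
        angle_le_vertexAngle (hball (mem_closedBall_self hρ.le)) (hball hbz.le) hzv hbv

theorem arctan_div_le_minAngle (hK : IsCompact K) (hKne : K.Nonempty)
    {z : EuclideanSpace ℝ (Fin 2)} {ρ R : ℝ} (hρ : 0 < ρ) (hball : closedBall z ρ ⊆ K)
    (hsub : K ⊆ closedBall z R) : arctan (ρ / R) ≤ minAngle K := by
  obtain ⟨v, hv⟩ := hK.extremePoints_nonempty hKne
  exact le_csInf ⟨_, v, hv, rfl⟩ fun _ ⟨w, hw, h⟩ => h ▸ arctan_div_le_vertexAngle hρ hball hsub hw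

theorem arctan_div_le_minAngle_of_smul (hK : IsCompact K) (hKne : K.Nonempty) {c : ℝ}
    (hc : 0 < c) {z : EuclideanSpace ℝ (Fin 2)} {ρ R : ℝ} (hρ : 0 < ρ)
    (hball : closedBall z ρ ⊆ c • K) (hsub : c • K ⊆ closedBall z R) :
    arctan (ρ / R) ≤ minAngle K := by
  have hscale : ∀ s, c⁻¹ • closedBall z s = closedBall (c⁻¹ • z) (c⁻¹ * s) := fun s => by
    rw [smul_closedBall' (inv_ne_zero hc.ne'), norm_inv, Real.norm_of_nonneg hc.le]
  have hK' : c⁻¹ • c • K = K := inv_smul_smul₀ hc.ne' K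
  rw [← mul_div_mul_left ρ R (inv_ne_zero hc.ne')]
  refine arctan_div_le_minAngle hK hKne (z := c⁻¹ • z) (by positivity) ?_ ?_
  · simpa only [hscale, hK'] using smul_set_mono (a := c⁻¹) hball
  · simpa only [hscale, hK'] using smul_set_mono (a := c⁻¹) hsub

end Angles

theorem stmt13_general (V : ℕ → Set (EuclideanSpace ℝ (Fin 2)))
    (hVfin : ∀ n, (V n).Finite)
    (J : ℕ → Set (EuclideanSpace ℝ (Fin 2))) (hJ : ∀ n, J n = convexHull ℝ (V n))
    (hp : Tendsto (fun n => per (J n)) atTop atTop)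
    (O : Set (EuclideanSpace ℝ (Fin 2)))
    (hOc : IsCompact O) (hOint : (interior O).Nonempty)
    (hconv : Tendsto (fun n => hausdorffDist ((per (J n))⁻¹ • J n) O) atTop (𝓝 0)) :
    0 < Filter.liminf (fun n => minAngle (J n)) atTop := by
  obtain ⟨x, hx⟩ := hOint
  obtain ⟨r, hr, hrO⟩ := nhds_basis_closedBall.mem_iff.1 (mem_interior_iff_mem_nhds.1 hx)
  obtain ⟨R, hOR⟩ := hOc.isBounded.subset_closedBall x
  have hR : 0 ≤ R := dist_self x ▸ hOR (interior_subset hx)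
  have hev : ∀ᶠ n in atTop, arctan (r / 2 / (R + r / 4)) ≤ minAngle (J n) := by
    have hr4 : (0 : ℝ) < r / 4 := by positivity
    filter_upwards [hp.eventually_gt_atTop 0, hconv.eventually (gt_mem_nhds hr4)] with n hpos hdist
    have hJc : IsCompact (J n) := by rw [hJ n]; exact (hVfin n).isCompact_convexHull ℝ
    have hJconv : Convex ℝ (J n) := by rw [hJ n]; exact convex_convexHull ℝ _
    have hJne : (J n).Nonempty := nonempty_iff_ne_empty.2 fun h => by simp [h, per] at hpos
    have hKc : IsCompact ((per (J n))⁻¹ • J n) := hJc.smul _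
    have hfin := hausdorffEDist_ne_top_of_nonempty_of_bounded hJne.smul_set
      ⟨x, interior_subset hx⟩ hKc.isBounded hOc.isBounded
    have hin := (hJconv.smul _).closedBall_subset_of_hausdorffDist_lt hKc.isClosed
      hJne.smul_set hfin hrO hdist
    refine arctan_div_le_minAngle_of_smul hJc hJne (inv_pos.2 hpos) (by positivity) ?_
      (subset_closedBall_of_hausdorffDist_lt hfin hOR hdist)
    exact (closedBall_subset_closedBall (by linarith)).trans hin
  have hbdd : IsCoboundedUnder (· ≥ ·) atTop fun n => minAngle (J n) :=
    (isBoundedUnder_of ⟨π, fun n => minAngle_le_pi⟩).isCoboundedUnder_ge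
  exact (arctan_pos.2 (by positivity)).trans_le (le_liminf_of_le hbdd hev)

theorem stmt13 (V : ℕ → Set (EuclideanSpace ℝ (Fin 2)))
    (hVfin : ∀ n, (V n).Finite) (hVlat : ∀ n, ∀ v ∈ V n, IsLatticePt v)
    (J : ℕ → Set (EuclideanSpace ℝ (Fin 2))) (hJ : ∀ n, J n = convexHull ℝ (V n))
    (hp : Tendsto (fun n => per (J n)) atTop atTop)
    (O : Set (EuclideanSpace ℝ (Fin 2)))
    (hOc : IsCompact O) (hOconv : Convex ℝ O) (hOint : (interior O).Nonempty)
    (hconv : Tendsto (fun n => hausdorffDist ((per (J n))⁻¹ • J n) O) atTop (𝓝 0)) :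
    0 < Filter.liminf (fun n => minAngle (J n)) atTop :=
  stmt13_general V hVfin J hJ hp O hOc hOint hconv
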